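/- Let H be an N×M complex matrix and S_x an M×M positive semidefinite Hermitian matrix with rank(S_x) = rank(H S_x) = D. Then there exist a precoder V ∈ ℂ^{M×D} and a decoder U ∈ ℂ^{N×D} such that: (i) Uᴴ H V is a diagonal matrix with positive real diagonal entries; (ii) V Vᴴ = S_x; and (iii) ∑_{d=1}^{D} log₂(1 + |u_dᴴ H v_d|²/‖u_d‖²) = log₂ det(I + H S_x Hᴴ), where u_d and v_d denote the d-th columns of U and V. That is, for every channel H and every transmit covariance S_x of the stated rank, there is a linear precoder/decoder pair that diagonalizes the MIMO channel and achieves the channel capacity C(S_x) = log₂ det(I + H S_x Hᴴ). -/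

import Mathlib

/-!
Factor `Sx = B Bᴴ` with `B` of width `D = rank Sx`. The second rank condition makes `C = H B`
of full column rank, so `Cᴴ C = Q diag(μ) Qᴴ` with all `μ d > 0`. With `V = B Q` and
`U = C Q diag(μ)^{-1/2}` one gets `Uᴴ U = 1` and `Uᴴ H V = diag(√μ)`, so the `d`-th rate
term is `log₂ (1 + μ d)`, while `det (1 + C Cᴴ) = det (1 + Cᴴ C) = ∏ d, (1 + μ d)`.
-/

open Matrix ComplexOrder

namespace Matrix

variable {𝕜 : Type*} [RCLike 𝕜] {l m n k : Type*} [Fintype n] [Fintype k]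

theorem submatrix_mul_submatrix_of_eq_zero {R : Type*} [NonUnitalNonAssocSemiring R]
    {p : n → Prop} [DecidablePred p] (e : k ≃ {j // p j}) {A : Matrix l n R} (B : Matrix n m R)
    (hA : ∀ i j, ¬p j → A i j = 0) :
    A.submatrix id (Subtype.val ∘ e) * B.submatrix (Subtype.val ∘ e) id = A * B := by
  ext i i'
  simp only [mul_apply, submatrix_apply, id, Function.comp_apply]
  rw [Fintype.sum_equiv e _ (fun j : {j // p j} => A i j * B j i') (fun _ => rfl),
    ← Fintype.sum_subtype_add_sum_subtype p, Fintype.sum_eq_zero (fun j : {j // ¬p j} => _),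
    add_zero]
  intro j
  simp [hA i j j.2]

theorem star_col_dotProduct_mulVec_col {R : Type*} [NonUnitalSemiring R] [StarRing R]
    [Fintype m] (U : Matrix n l R) (A : Matrix n m R) (V : Matrix m l R) (j : l) :
    star (fun i => U i j) ⬝ᵥ (A *ᵥ fun i => V i j) = (Uᴴ * A * V) j j := by
  rw [Matrix.mul_assoc]
  simp only [mul_apply, dotProduct, mulVec, conjTranspose_apply, Pi.star_apply]

theorem conjTranspose_mul_self_apply_self (U : Matrix n l 𝕜) (j : l) :
    (Uᴴ * U) j j = ((∑ i, ‖U i j‖ ^ 2 : ℝ) : 𝕜) := by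
  simp [mul_apply, RCLike.conj_mul]

theorem IsHermitian.eq_eigenvectorUnitary_mul_diagonal_mul [DecidableEq n] {A : Matrix n n 𝕜}
    (hA : A.IsHermitian) :
    A = (hA.eigenvectorUnitary : Matrix n n 𝕜) * diagonal (RCLike.ofReal ∘ hA.eigenvalues) *
      (hA.eigenvectorUnitary : Matrix n n 𝕜)ᴴ := by
  conv_lhs => rw [hA.spectral_theorem]
  rfl

theorem IsHermitian.conjTranspose_eigenvectorUnitary_mul_mul [DecidableEq n] {A : Matrix n n 𝕜}
    (hA : A.IsHermitian) :
    (hA.eigenvectorUnitary : Matrix n n 𝕜)ᴴ * A * (hA.eigenvectorUnitary : Matrix n n 𝕜) =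
      diagonal (RCLike.ofReal ∘ hA.eigenvalues) := by
  rw [← star_eq_conjTranspose]
  simpa using hA.conjStarAlgAut_star_eigenvectorUnitary

theorem PosSemidef.exists_mul_conjTranspose_eq [DecidableEq n] {S : Matrix n n 𝕜}
    (hS : S.PosSemidef) (hk : S.rank = Fintype.card k) :
    ∃ B : Matrix n k 𝕜, B * Bᴴ = S := by
  set Q : Matrix n n 𝕜 := (hS.isHermitian.eigenvectorUnitary : Matrix n n 𝕜)
  set μ := hS.isHermitian.eigenvalues
  set A := Q * diagonal (fun i => (√(μ i) : 𝕜))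
  have hAA : A * Aᴴ = S := by
    have hsqrt : ∀ i, (√(μ i) : 𝕜) * star (√(μ i) : 𝕜) = μ i := fun i => by
      rw [RCLike.star_def, RCLike.conj_ofReal, ← RCLike.ofReal_mul,
        Real.mul_self_sqrt (hS.eigenvalues_nonneg i)]
    rw [conjTranspose_mul, diagonal_conjTranspose, Matrix.mul_assoc, ← Matrix.mul_assoc _ _ Qᴴ,
      diagonal_mul_diagonal, ← Matrix.mul_assoc]
    simp only [Pi.star_apply, hsqrt]
    exact hS.isHermitian.eq_eigenvectorUnitary_mul_diagonal_mul.symm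
  have e : k ≃ {i // μ i ≠ 0} :=
    Fintype.equivOfCardEq (by rw [← hk, hS.isHermitian.rank_eq_card_non_zero_eigs])
  refine ⟨A.submatrix id (Subtype.val ∘ e), ?_⟩
  rw [conjTranspose_submatrix, submatrix_mul_submatrix_of_eq_zero e _ fun i j hj => ?_, hAA]
  simp [A, not_not.mp hj]

theorem PosSemidef.posDef_of_rank_eq_card [DecidableEq n] {A : Matrix n n 𝕜}
    (hA : A.PosSemidef) (h : A.rank = Fintype.card n) : A.PosDef := by
  refine hA.isHermitian.posDef_iff_eigenvalues_pos.mpr fun i =>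
    (hA.eigenvalues_nonneg i).lt_of_ne' fun hi => ?_
  have hlt := Fintype.card_subtype_lt (p := fun j => hA.isHermitian.eigenvalues j ≠ 0)
    (x := i) (not_not.mpr hi)
  rw [← hA.isHermitian.rank_eq_card_non_zero_eigs, h] at hlt
  exact lt_irrefl _ hlt

theorem posDef_conjTranspose_mul_self_mul_of_rank_eq [Fintype l] [Fintype m] [DecidableEq k]
    (H : Matrix l m 𝕜) (B : Matrix m k 𝕜) (h : (H * (B * Bᴴ)).rank = Fintype.card k) :
    ((H * B)ᴴ * (H * B)).PosDef := by
  refine (posSemidef_conjTranspose_mul_self _).posDef_of_rank_eq_card ?_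
  rw [rank_conjTranspose_mul_self]
  refine le_antisymm (H * B).rank_le_card_width ?_
  calc Fintype.card k = (H * B * Bᴴ).rank := by rw [← h, Matrix.mul_assoc]
    _ ≤ (H * B).rank := rank_mul_le_left _ _

theorem PosDef.exists_conjTranspose_mul_mul_eigenvectorUnitary_eq_diagonal [Fintype l]
    [DecidableEq n] {C : Matrix l n 𝕜} (hC : (Cᴴ * C).PosDef) :
    ∃ U : Matrix l n 𝕜, Uᴴ * U = 1 ∧
      Uᴴ * C * (hC.isHermitian.eigenvectorUnitary : Matrix n n 𝕜) =
        diagonal (fun i => (√(hC.isHermitian.eigenvalues i) : 𝕜)) := by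
  set Q : Matrix n n 𝕜 := (hC.isHermitian.eigenvectorUnitary : Matrix n n 𝕜)
  set μ := hC.isHermitian.eigenvalues
  have hσ : ∀ i, 0 < √(μ i) := fun i => Real.sqrt_pos.mpr (hC.eigenvalues_pos i)
  have hinv : ∀ i, (√(μ i))⁻¹ * μ i = √(μ i) := fun i => by
    rw [inv_mul_eq_iff_eq_mul₀ (hσ i).ne', Real.mul_self_sqrt (hC.eigenvalues_pos i).le]
  set s : Matrix n n 𝕜 := diagonal (fun i => (((√(μ i))⁻¹ : ℝ) : 𝕜))
  have hs : sᴴ = s := by simp [s, diagonal_conjTranspose]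
  set U := C * Q * s
  have hUCQ : Uᴴ * C * Q = diagonal (fun i => (√(μ i) : 𝕜)) :=
    calc Uᴴ * C * Q = s * (Qᴴ * (Cᴴ * C) * Q) := by
          simp only [U, conjTranspose_mul, hs, Matrix.mul_assoc]
      _ = _ := by
          rw [hC.isHermitian.conjTranspose_eigenvectorUnitary_mul_mul, diagonal_mul_diagonal]
          congr 1
          funext i
          simp only [Function.comp_apply, ← RCLike.ofReal_mul]
          exact congrArg _ (hinv i)
  refine ⟨U, ?_, hUCQ⟩
  calc Uᴴ * U = Uᴴ * C * Q * s := by simp only [U, Matrix.mul_assoc]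
    _ = 1 := by
        rw [hUCQ, diagonal_mul_diagonal, ← diagonal_one]
        simp only [← RCLike.ofReal_mul, mul_inv_cancel₀ (hσ _).ne', RCLike.ofReal_one]

theorem det_one_add_mul_conjTranspose [Fintype l] [DecidableEq l] [DecidableEq n]
    (C : Matrix l n 𝕜) :
    (1 + C * Cᴴ).det =
      ∏ i, (1 + ((isHermitian_conjTranspose_mul_self C).eigenvalues i : 𝕜)) := by
  set hP := isHermitian_conjTranspose_mul_self C
  set Q : Matrix n n 𝕜 := (hP.eigenvectorUnitary : Matrix n n 𝕜)
  have hQ : Q * Qᴴ = 1 := Unitary.coe_mul_star_self _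
  have hQ' : Qᴴ * Q = 1 := Unitary.coe_star_mul_self _
  calc (1 + C * Cᴴ).det
      = (Q * (1 + diagonal (RCLike.ofReal ∘ hP.eigenvalues)) * Qᴴ).det := by
        rw [det_one_add_mul_comm, Matrix.mul_add, Matrix.add_mul, Matrix.mul_one, hQ,
          ← hP.eq_eigenvectorUnitary_mul_diagonal_mul]
    _ = (1 + diagonal (RCLike.ofReal ∘ hP.eigenvalues) : Matrix n n 𝕜).det :=
        det_conj_of_mul_eq_one hQ hQ'
    _ = ∏ i, (1 + (hP.eigenvalues i : 𝕜)) := by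
        rw [← diagonal_one, diagonal_add, det_diagonal]
        rfl

end Matrix

/-- For every channel `H` and every positive semidefinite transmit
covariance `Sx` with `rank(Sx) = rank(H Sx) = D`, there exist a precoder
`V ∈ ℂ^{M×D}` and a decoder `U ∈ ℂ^{N×D}` such that (i) `Uᴴ H V` is a diagonal matrix
with positive real diagonal entries, (ii) `V Vᴴ = Sx`, and (iii) the achievable
sum-rate `∑ d log₂(1 + |u_dᴴ H v_d|²/‖u_d‖²)` equals the capacity
`log₂ det(I + H Sx Hᴴ)`. -/
theorem stmt_8 {N M D : ℕ}
    (H : Matrix (Fin N) (Fin M) ℂ) (Sx : Matrix (Fin M) (Fin M) ℂ)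
    (hSx : Sx.PosSemidef)
    (hrank1 : Sx.rank = D) (hrank2 : (H * Sx).rank = D) :
    ∃ (V : Matrix (Fin M) (Fin D) ℂ) (U : Matrix (Fin N) (Fin D) ℂ),
      -- (i) Uᴴ H V is diagonal with positive real diagonal entries
      (∃ φ : Fin D → ℝ, (∀ d, 0 < φ d) ∧
        Uᴴ * H * V = Matrix.diagonal (fun d => (φ d : ℂ))) ∧
      -- (ii) transmit covariance condition
      V * Vᴴ = Sx ∧
      -- (iii) capacity-achieving condition
      (∑ d : Fin D,
          Real.logb 2 (1 +
            ‖star (fun i => U i d) ⬝ᵥ (H *ᵥ fun j => V j d)‖ ^ 2 /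
              (∑ i, ‖U i d‖ ^ 2))) =
        Real.logb 2 ((1 + H * Sx * Hᴴ).det.re) := by
  obtain ⟨B, rfl⟩ := hSx.exists_mul_conjTranspose_eq (k := Fin D) (by simpa using hrank1)
  set C := H * B
  have hC : (Cᴴ * C).PosDef :=
    posDef_conjTranspose_mul_self_mul_of_rank_eq H B (by simpa using hrank2)
  obtain ⟨U, hUU, hUCQ⟩ := hC.exists_conjTranspose_mul_mul_eigenvectorUnitary_eq_diagonal
  set Q := (hC.isHermitian.eigenvectorUnitary : Matrix (Fin D) (Fin D) ℂ)
  set μ := hC.isHermitian.eigenvalues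
  have hμ : ∀ d, 0 < μ d := hC.eigenvalues_pos
  have hUHV : Uᴴ * H * (B * Q) = diagonal (fun d => (√(μ d) : ℂ)) := by
    simp only [C, Matrix.mul_assoc] at hUCQ ⊢
    exact hUCQ
  have hrate : ∀ d, 1 + ‖star (fun i => U i d) ⬝ᵥ (H *ᵥ fun j => (B * Q) j d)‖ ^ 2 /
      (∑ i, ‖U i d‖ ^ 2) = 1 + μ d := fun d => by
    have hnorm : (∑ i, ‖U i d‖ ^ 2 : ℝ) = 1 := by
      have h := conjTranspose_mul_self_apply_self U d
      rw [hUU, one_apply_eq, RCLike.ofReal_eq_complex_ofReal] at h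
      exact_mod_cast h.symm
    rw [star_col_dotProduct_mulVec_col, hUHV, diagonal_apply_eq, hnorm, div_one,
      Complex.norm_real, Real.norm_eq_abs, sq_abs, Real.sq_sqrt (hμ d).le]
  have hdet : (1 + H * (B * Bᴴ) * Hᴴ).det = ((∏ d, (1 + μ d) : ℝ) : ℂ) := by
    rw [show H * (B * Bᴴ) * Hᴴ = C * Cᴴ by simp only [C, conjTranspose_mul, Matrix.mul_assoc],
      det_one_add_mul_conjTranspose]
    push_cast
    rfl
  refine ⟨B * Q, U, ⟨_, fun d => Real.sqrt_pos.mpr (hμ d), hUHV⟩, ?_, ?_⟩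
  · rw [conjTranspose_mul, Matrix.mul_assoc, ← Matrix.mul_assoc Q,
      show Q * Qᴴ = 1 from Unitary.coe_mul_star_self _, Matrix.one_mul]
  · rw [Finset.sum_congr rfl fun d _ => congrArg _ (hrate d), hdet, Complex.ofReal_re,
      Real.logb_prod _ _ fun d _ => (by linarith [hμ d])]
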